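/- If √n_1 + √n_2 = √n_3 + √n_4 for natural numbers n_1, n_2, n_3, n_4 ≥ 1, then CO_4(c√n_1, c√n_2, -c√n_3, -c√n_4) = 16 · ∏_{j=1}^{4} sin(c√n_j / 2) for every real number c. -/
import Mathlib

open Real Finset

/-- Alternating cosine sum `CO_k`. -/
noncomputable def CO (k : ℕ) (α : Fin k → ℝ) : ℝ :=
  ∑ j : Fin k → Fin 2, (-1 : ℝ) ^ (∑ i, (j i : ℕ)) * Real.cos (∑ i, (j i : ℕ) * α i)

lemma CO_eq_re (k : ℕ) (α : Fin k → ℝ) :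
    CO k α = (∏ i, (1 - Complex.exp (α i * Complex.I))).re := by
  have hfac : ∀ i, (1 - Complex.exp (α i * Complex.I)) =
      ∑ j : Fin 2, (-1:ℂ)^(j:ℕ) * Complex.exp ((j:ℕ) * α i * Complex.I) := by
    intro i
    rw [Fin.sum_univ_two]
    simp
    ring
  symm
  calc (∏ i, (1 - Complex.exp (α i * Complex.I))).re
      = (∏ i, ∑ j : Fin 2, (-1:ℂ)^(j:ℕ) * Complex.exp ((j:ℕ) * α i * Complex.I)).re := by
        rw [Finset.prod_congr rfl (fun i _ => hfac i)]
    _ = (∑ p : Fin k → Fin 2, ∏ i, (-1:ℂ)^((p i:ℕ)) * Complex.exp ((p i:ℕ) * α i * Complex.I)).re := by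
        rw [Finset.prod_univ_sum]
        rw [Fintype.piFinset_univ]
    _ = CO k α := by
        rw [Complex.re_sum]
        unfold CO
        refine Finset.sum_congr rfl (fun p _ => ?_)
        rw [Finset.prod_mul_distrib, ← Complex.exp_sum]
        have h1 : (∏ i, ((-1:ℂ))^((p i:ℕ))) = ((-1:ℝ)^(∑ i, (p i:ℕ)) : ℝ) := by
          rw [Finset.prod_pow_eq_pow_sum]
          push_cast
          ring
        have h2 : (∑ i, ((p i:ℕ) : ℂ) * (α i) * Complex.I)
            = ((∑ i, ((p i:ℕ):ℝ) * α i : ℝ) : ℂ) * Complex.I := by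
          push_cast
          rw [Finset.sum_mul]
        rw [h1, h2, Complex.re_ofReal_mul, Complex.exp_ofReal_mul_I_re]

lemma one_sub_exp (θ : ℝ) : 1 - Complex.exp (θ * Complex.I) =
    (-2*Complex.I) * Real.sin (θ/2) * Complex.exp ((θ/2 : ℝ) * Complex.I) := by
  rw [Complex.ofReal_sin, Complex.sin]
  simp only [neg_mul]
  have h1 : Complex.exp ((θ:ℂ) * Complex.I) =
      Complex.exp (((θ/2:ℝ):ℂ) * Complex.I) * Complex.exp (((θ/2:ℝ):ℂ) * Complex.I) := by
    rw [← Complex.exp_add]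
    congr 1
    push_cast
    ring
  have h2 : Complex.exp (-(((θ/2:ℝ):ℂ) * Complex.I)) * Complex.exp (((θ/2:ℝ):ℂ) * Complex.I) = 1 := by
    rw [← Complex.exp_add]; simp
  linear_combination (-1 : ℂ)*h1 + Complex.I^2*h2 +
    (1 - Complex.exp (((θ/2:ℝ):ℂ)*Complex.I)^2)*Complex.I_sq

theorem stmt7 (n₁ n₂ n₃ n₄ : ℕ) (h₁ : 1 ≤ n₁) (h₂ : 1 ≤ n₂) (h₃ : 1 ≤ n₃) (h₄ : 1 ≤ n₄)
    (h : Real.sqrt n₁ + Real.sqrt n₂ = Real.sqrt n₃ + Real.sqrt n₄) (c : ℝ) :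
    CO 4 ![c * Real.sqrt n₁, c * Real.sqrt n₂, -(c * Real.sqrt n₃), -(c * Real.sqrt n₄)] =
      16 * (Real.sin (c * Real.sqrt n₁ / 2) * Real.sin (c * Real.sqrt n₂ / 2) *
        Real.sin (c * Real.sqrt n₃ / 2) * Real.sin (c * Real.sqrt n₄ / 2)) := by
  set a := c * Real.sqrt n₁ with ha
  set b := c * Real.sqrt n₂ with hb
  set d := c * Real.sqrt n₃ with hd
  set e := c * Real.sqrt n₄ with he
  have hsum : a + b + (-d) + (-e) = 0 := by
    rw [ha, hb, hd, he]; linear_combination c * h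
  rw [CO_eq_re]
  have key : (∏ i, (1 - Complex.exp ((![a, b, -d, -e] i : ℝ) * Complex.I))) =
      ((16 * (Real.sin (a/2) * Real.sin (b/2) * Real.sin (d/2) * Real.sin (e/2)) : ℝ) : ℂ) := by
    rw [Fin.prod_univ_four]
    simp only [Matrix.cons_val_zero, Matrix.cons_val_one, Matrix.head_cons,
      Matrix.cons_val_two, Matrix.tail_cons, Matrix.cons_val_three]
    rw [one_sub_exp a, one_sub_exp b, one_sub_exp (-d), one_sub_exp (-e)]
    have hc : (a:ℂ) + b + (-d) + (-e) = 0 := by exact_mod_cast congrArg (Complex.ofReal) hsum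
    have hexp : Complex.exp (((a/2 : ℝ):ℂ) * Complex.I) * Complex.exp (((b/2 : ℝ):ℂ) * Complex.I) *
        Complex.exp ((((-d)/2 : ℝ):ℂ) * Complex.I) * Complex.exp ((((-e)/2 : ℝ):ℂ) * Complex.I) = 1 := by
      rw [← Complex.exp_add, ← Complex.exp_add, ← Complex.exp_add]
      rw [show ((a/2 : ℝ):ℂ) * Complex.I + ((b/2 : ℝ):ℂ) * Complex.I + (((-d)/2 : ℝ):ℂ) * Complex.I
          + (((-e)/2 : ℝ):ℂ) * Complex.I = 0 by push_cast; linear_combination (Complex.I/2) * hc]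
      exact Complex.exp_zero
    have hI : Complex.I ^ 4 = 1 := by
      rw [show (4:ℕ) = 2*2 from rfl, pow_mul, Complex.I_sq]; norm_num
    rw [show Real.sin ((-d)/2) = -Real.sin (d/2) by rw [neg_div, Real.sin_neg],
        show Real.sin ((-e)/2) = -Real.sin (e/2) by rw [neg_div, Real.sin_neg]]
    push_cast at hexp ⊢
    linear_combination (16 * (Complex.sin ((a:ℂ)/2) * Complex.sin ((b:ℂ)/2) * Complex.sin ((d:ℂ)/2)
        * Complex.sin ((e:ℂ)/2)) * Complex.I^4) * hexp +
      (16 * (Complex.sin ((a:ℂ)/2) * Complex.sin ((b:ℂ)/2) * Complex.sin ((d:ℂ)/2)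
        * Complex.sin ((e:ℂ)/2))) * hI
  rw [key, Complex.ofReal_re]
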